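/- Let t = 1 − n(b−c)/((n−1)·b) ∈ (0,1). For every k ∈ {1,…,n−2} there exists δ₀ ∈ (0,1) such that for all δ ∈ (δ₀,1): the set {ε ∈ (0,1) : V_k(ε,δ) > W_n(ε,δ)} (equivalently {ε ∈ (0,1) : Δ(ε;k,δ) > t}) is a nonempty open interval (ε̲_k, ε̄_k) with 0 < ε̲_k < ε̄_k < 1. That is, the tolerant conditional cooperative strategy T_k strictly beats a single defector mutant exactly for mistake rates in a band whose lower endpoint is strictly positive. -/

import Mathlib

/-!
Write `N = n - 1`, `m = n - k - 1` and `t = 1 - n(b - c)/((n - 1)b)`. Since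
`F_C = (b - c)(1 - ε) = (1 - t) F_D`, clearing the positive denominators turns both
`V_k > W_n` and `Δ > t` into `t / δ < g(ε)`, where
`g(ε) = (1 - ε) ψ(N,m,ε) + t Σ_{q<m} ψ(N,q,ε)`.
The derivative of a partial sum of Bernstein polynomials telescopes, and Pascal's rule gives
`g'(ε) = (N/m) ψ(N-1,m-1,ε) (m(1 - t) - (N + 1)ε)`. So `g` increases from `g(0) = t` to its
peak at `p = m(1 - t)/(N + 1)` and then decreases to `g(1) = 0`. For `δ > t / g(p)` the level
`t / δ` lies strictly between `t` and `g(p)`, and the set where `g > t / δ` is an interval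
`(ε̲, ε̄)` with `0 < ε̲ < p < ε̄ < 1`.
-/

open Finset

/-- `ψ(j,q,ε) = (j choose q)·ε^q·(1−ε)^(j−q)`. -/
noncomputable def psi (j q : ℕ) (ε : ℝ) : ℝ :=
  (j.choose q : ℝ) * ε ^ q * (1 - ε) ^ (j - q)

/-- One-shot expected payoff of cooperation against `n−1` error-prone cooperators. -/
noncomputable def FC (n : ℕ) (b c ε : ℝ) : ℝ :=
  (1 - ε) * ∑ q ∈ range n, psi (n - 1) q ε * (b * ((n : ℝ) - q) / n - c) +
    ε * ∑ q ∈ range n, psi (n - 1) q ε * (b * ((n : ℝ) - 1 - q) / n)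

/-- One-shot expected payoff of defection against `n−1` error-prone cooperators. -/
noncomputable def FD (n : ℕ) (b ε : ℝ) : ℝ :=
  ∑ q ∈ range n, psi (n - 1) q ε * (b * ((n : ℝ) - 1 - q) / n)

/-- Repeated-game payoff of the incumbent `T_k` strategy in a `T_k` population. -/
noncomputable def Vk (n k : ℕ) (b c ε δ : ℝ) : ℝ :=
  FC n b c ε /
    (1 - δ * ∑ q ∈ range (n - k - 1), psi (n - 1) q ε -
      δ * (1 - ε) * psi (n - 1) (n - k - 1) ε)

/-- Repeated-game payoff of a single defector (`T_n`) mutant in a `T_k` population. -/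
noncomputable def Wn (n k : ℕ) (b ε δ : ℝ) : ℝ :=
  FD n b ε / (1 - δ * ∑ q ∈ range (n - k - 1), psi (n - 1) q ε)

/-- The continuation factor `Δ(ε;k,δ)`. -/
noncomputable def Delta (n k : ℕ) (ε δ : ℝ) : ℝ :=
  δ * (1 - ε) * psi (n - 1) (n - k - 1) ε /
    (1 - δ * ∑ q ∈ range (n - k - 1), psi (n - 1) q ε)

theorem exists_superlevel_eq_Ioo_of_unimodal {f : ℝ → ℝ} {a p b s : ℝ} (hap : a ≤ p)
    (hpb : p ≤ b) (hf : ContinuousOn f (Set.Icc a b)) (hmono : StrictMonoOn f (Set.Icc a p))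
    (hanti : StrictAntiOn f (Set.Icc p b)) (ha : f a < s) (hb : f b < s) (hp : s < f p) :
    ∃ lo hi, a < lo ∧ lo < hi ∧ hi < b ∧ {x | x ∈ Set.Ioo a b ∧ s < f x} = Set.Ioo lo hi := by
  obtain ⟨lo, ⟨hlo, hlop⟩, rfl⟩ :=
    intermediate_value_Ioo hap (hf.mono (Set.Icc_subset_Icc_right hpb)) ⟨ha, hp⟩
  obtain ⟨hi, ⟨hphi, hhi⟩, hfhi⟩ :=
    intermediate_value_Ioo' hpb (hf.mono (Set.Icc_subset_Icc_left hap)) ⟨hb, hp⟩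
  refine ⟨lo, hi, hlo, hlop.trans hphi, hhi, Set.ext fun x => ?_⟩
  have hlo_mem : lo ∈ Set.Icc a p := ⟨hlo.le, hlop.le⟩
  have hhi_mem : hi ∈ Set.Icc p b := ⟨hphi.le, hhi.le⟩
  simp only [Set.mem_ofPred_eq, Set.mem_Ioo]
  rcases le_total x p with hxp | hpx
  · constructor
    · rintro ⟨⟨hax, -⟩, hx⟩
      exact ⟨(hmono.lt_iff_lt hlo_mem ⟨hax.le, hxp⟩).mp hx, hxp.trans_lt hphi⟩
    · rintro ⟨hlox, hxhi⟩
      exact ⟨⟨hlo.trans hlox, hxhi.trans hhi⟩,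
        (hmono.lt_iff_lt hlo_mem ⟨(hlo.trans hlox).le, hxp⟩).mpr hlox⟩
  · rw [← hfhi]
    constructor
    · rintro ⟨⟨-, hxb⟩, hx⟩
      exact ⟨hlop.trans_le hpx, (hanti.lt_iff_gt hhi_mem ⟨hpx, hxb.le⟩).mp hx⟩
    · rintro ⟨hlox, hxhi⟩
      exact ⟨⟨hlo.trans hlox, hxhi.trans hhi⟩,
        (hanti.lt_iff_gt hhi_mem ⟨hpx, (hxhi.trans hhi).le⟩).mpr hxhi⟩

theorem bernsteinPolynomial.derivative_sum_range {R : Type*} [CommRing R] (n m : ℕ) :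
    Polynomial.derivative (∑ ν ∈ range (m + 1), bernsteinPolynomial R n ν) =
      -(n * bernsteinPolynomial R (n - 1) m) := by
  induction m with
  | zero => simp [bernsteinPolynomial.derivative_zero]
  | succ m ih =>
    rw [sum_range_succ, Polynomial.derivative_add, ih, bernsteinPolynomial.derivative_succ]
    ring

theorem psi_eq_eval (j q : ℕ) (ε : ℝ) : psi j q ε = (bernsteinPolynomial ℝ j q).eval ε := by
  simp [psi, bernsteinPolynomial]

theorem psi_nonneg {j q : ℕ} {ε : ℝ} (h0 : 0 ≤ ε) (h1 : ε ≤ 1) : 0 ≤ psi j q ε := by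
  have : 0 ≤ 1 - ε := by linarith
  unfold psi; positivity

theorem psi_pos {j q : ℕ} {ε : ℝ} (hq : q ≤ j) (h0 : 0 < ε) (h1 : ε < 1) : 0 < psi j q ε := by
  have : 0 < 1 - ε := by linarith
  have : 0 < (j.choose q : ℝ) := by exact_mod_cast Nat.choose_pos hq
  unfold psi; positivity

theorem sum_psi (N : ℕ) (ε : ℝ) : ∑ q ∈ range (N + 1), psi N q ε = 1 := by
  simpa [psi_eq_eval, Polynomial.eval_finsetSum] using
    congrArg (Polynomial.eval ε) (bernsteinPolynomial.sum ℝ N)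

theorem sum_psi_mul (N : ℕ) (ε : ℝ) : ∑ q ∈ range (N + 1), psi N q ε * q = N * ε := by
  simpa [psi_eq_eval, Polynomial.eval_finsetSum, mul_comm] using
    congrArg (Polynomial.eval ε) (bernsteinPolynomial.sum_smul ℝ N)

theorem sum_psi_mul_affine (N : ℕ) (ε α β : ℝ) :
    ∑ q ∈ range (N + 1), psi N q ε * (α + β * q) = α + β * (N * ε) := by
  simp_rw [mul_add, sum_add_distrib, ← sum_mul, sum_psi, mul_left_comm _ β, ← mul_sum, sum_psi_mul]
  ring

theorem sum_range_psi_le_one {N m : ℕ} {ε : ℝ} (hm : m ≤ N + 1) (h0 : 0 ≤ ε) (h1 : ε ≤ 1) :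
    ∑ q ∈ range m, psi N q ε ≤ 1 :=
  sum_psi N ε ▸ sum_le_sum_of_subset_of_nonneg (range_subset_range.mpr hm)
    fun _ _ _ => psi_nonneg h0 h1

theorem psi_succ_succ (N q : ℕ) (ε : ℝ) :
    psi (N + 1) (q + 1) ε = ε * psi N q ε + (1 - ε) * psi N (q + 1) ε := by
  rcases lt_trichotomy q N with hq | rfl | hq
  · obtain ⟨r, rfl⟩ := Nat.exists_eq_add_of_lt hq
    simp only [psi, Nat.choose_succ_succ', show q + r + 1 - q = r + 1 by omega,
      show q + r + 1 - (q + 1) = r by omega, show q + r + 1 + 1 - (q + 1) = r + 1 by omega]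
    push_cast; ring
  · simp [psi, pow_succ]; ring
  · simp [psi, Nat.choose_eq_zero_of_lt, hq, Nat.succ_lt_succ hq, Nat.lt_succ_of_lt hq]

theorem succ_mul_psi_succ_succ (N q : ℕ) (ε : ℝ) :
    (q + 1) * psi (N + 1) (q + 1) ε = (N + 1) * ε * psi N q ε := by
  have h : ((N + 1).choose (q + 1) : ℝ) * (q + 1) = (N + 1) * N.choose q := by
    exact_mod_cast (Nat.add_one_mul_choose_eq N q).symm
  simp only [psi, Nat.add_sub_add_right]
  linear_combination ε ^ q * ε * (1 - ε) ^ (N - q) * h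

theorem hasDerivAt_psi_succ (N q : ℕ) (x : ℝ) :
    HasDerivAt (psi N (q + 1)) (N * (psi (N - 1) q x - psi (N - 1) (q + 1) x)) x := by
  have h := (bernsteinPolynomial ℝ N (q + 1)).hasDerivAt x
  rw [bernsteinPolynomial.derivative_succ] at h
  simpa [← psi_eq_eval] using h

theorem hasDerivAt_sum_range_psi (N m : ℕ) (x : ℝ) :
    HasDerivAt (fun ε => ∑ q ∈ range (m + 1), psi N q ε) (-(N * psi (N - 1) m x)) x := by
  have h := (∑ q ∈ range (m + 1), bernsteinPolynomial ℝ N q).hasDerivAt x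
  rw [bernsteinPolynomial.derivative_sum_range] at h
  simpa [← psi_eq_eval, Polynomial.eval_finsetSum] using h

noncomputable def threshold (n : ℕ) (b c : ℝ) : ℝ := 1 - n * (b - c) / (((n : ℝ) - 1) * b)

theorem threshold_mem_Ioo {n : ℕ} (hn : 2 ≤ n) {b c : ℝ} (hbc : b / n < c)
    (hcb : c < b) : threshold n b c ∈ Set.Ioo 0 1 := by
  have hn1 : (1 : ℝ) < n := by exact_mod_cast hn
  rw [div_lt_iff₀ (by positivity)] at hbc
  constructor
  · rw [threshold, sub_pos, div_lt_one (by nlinarith)]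
    nlinarith
  · exact sub_lt_self 1 (div_pos (by nlinarith) (by nlinarith))

theorem FD_eq {n : ℕ} (hn : 0 < n) (b ε : ℝ) : FD n b ε = b * (n - 1) / n * (1 - ε) := by
  obtain ⟨N, rfl⟩ := Nat.exists_eq_add_of_lt hn
  have hN : (N : ℝ) + 1 ≠ 0 := by positivity
  have h := sum_psi_mul_affine N ε (b * N / (N + 1)) (-b / (N + 1))
  simp only [FD, zero_add, Nat.add_sub_cancel, Nat.cast_add, Nat.cast_one]
  rw [sum_congr rfl fun q _ => by rw [show b * ((N : ℝ) + 1 - 1 - q) / (N + 1) =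
    b * N / (N + 1) + -b / (N + 1) * q by field_simp; ring], h]
  field_simp; ring

theorem FC_eq {n : ℕ} (hn : 0 < n) (b c ε : ℝ) : FC n b c ε = (b - c) * (1 - ε) := by
  have hFD := FD_eq hn b ε
  obtain ⟨N, rfl⟩ := Nat.exists_eq_add_of_lt hn
  have hN : (N : ℝ) + 1 ≠ 0 := by positivity
  have h := sum_psi_mul_affine N ε (b - c) (-b / (N + 1))
  simp only [FD, FC, zero_add, Nat.add_sub_cancel, Nat.cast_add, Nat.cast_one] at hFD ⊢
  rw [hFD, sum_congr rfl fun q _ => by rw [show b * ((N : ℝ) + 1 - q) / (N + 1) - c =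
    b - c + -b / (N + 1) * q by field_simp; ring], h]
  field_simp; ring

theorem one_sub_mul_sum_psi_sub_pos {N m : ℕ} (hm : m ≤ N) {ε δ : ℝ} (hε0 : 0 ≤ ε)
    (hε1 : ε ≤ 1) (hδ0 : 0 ≤ δ) (hδ1 : δ < 1) :
    0 < 1 - δ * ∑ q ∈ range m, psi N q ε - δ * (1 - ε) * psi N m ε := by
  have hsum := sum_range_psi_le_one (N := N) (m := m + 1) (by omega) hε0 hε1
  rw [sum_range_succ] at hsum
  have hP := psi_nonneg (j := N) (q := m) hε0 hε1
  nlinarith [mul_le_mul_of_nonneg_left hsum hδ0, mul_nonneg (mul_nonneg hδ0 hε0) hP]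

theorem FC_eq_one_sub_threshold_mul_FD {n : ℕ} (hn : 2 ≤ n) {b : ℝ} (hb : b ≠ 0) (c ε : ℝ) :
    FC n b c ε = (1 - threshold n b c) * FD n b ε := by
  have : (n : ℝ) - 1 ≠ 0 := sub_ne_zero.mpr (by exact_mod_cast (by omega : n ≠ 1))
  rw [FC_eq (by omega), FD_eq (by omega), threshold]
  field_simp
  ring

theorem Wn_lt_Vk_iff_lt_Delta {n : ℕ} (hn : 2 ≤ n) (k : ℕ) {b : ℝ} (hb : 0 < b) (c : ℝ)
    {ε δ : ℝ} (hε0 : 0 ≤ ε) (hε1 : ε < 1) (hδ0 : 0 ≤ δ) (hδ1 : δ < 1) :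
    Wn n k b ε δ < Vk n k b c ε δ ↔ threshold n b c < Delta n k ε δ := by
  have hD2 := one_sub_mul_sum_psi_sub_pos (N := n - 1) (m := n - k - 1) (by omega) hε0 hε1.le
    hδ0 hδ1
  set S := ∑ q ∈ range (n - k - 1), psi (n - 1) q ε
  set P := psi (n - 1) (n - k - 1) ε
  have hD1 : 0 < 1 - δ * S := by
    have : 0 ≤ δ * (1 - ε) * P := mul_nonneg (mul_nonneg hδ0 (by linarith)) (psi_nonneg hε0 hε1.le)
    linarith
  have hFD : 0 < FD n b ε := by
    have : (1 : ℝ) < n := by exact_mod_cast hn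
    have : 0 < 1 - ε := by linarith
    rw [FD_eq (by omega)]
    exact mul_pos (div_pos (mul_pos hb (by linarith)) (by linarith)) this
  unfold Wn Vk Delta
  rw [FC_eq_one_sub_threshold_mul_FD hn hb.ne', div_lt_div_iff₀ hD1 hD2, lt_div_iff₀ hD1,
    mul_comm (1 - _), mul_assoc (FD n b ε), mul_lt_mul_iff_right₀ hFD]
  constructor <;> intro h <;> linarith

noncomputable def stabilityProfile (N m : ℕ) (t ε : ℝ) : ℝ :=
  (1 - ε) * psi N m ε + t * ∑ q ∈ range m, psi N q ε

theorem lt_Delta_iff {n k : ℕ} (t : ℝ) {ε δ : ℝ} (hε0 : 0 ≤ ε) (hε1 : ε ≤ 1) (hδ0 : 0 < δ)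
    (hδ1 : δ < 1) :
    t < Delta n k ε δ ↔ t / δ < stabilityProfile (n - 1) (n - k - 1) t ε := by
  have hS := sum_range_psi_le_one (N := n - 1) (m := n - k - 1) (by omega) hε0 hε1
  have hD1 : 0 < 1 - δ * ∑ q ∈ range (n - k - 1), psi (n - 1) q ε := by
    nlinarith [mul_le_mul_of_nonneg_left hS hδ0.le]
  unfold Delta stabilityProfile
  rw [lt_div_iff₀ hD1, div_lt_iff₀ hδ0]
  constructor <;> intro h <;> linarith

theorem stabilityProfile_zero {N m : ℕ} (hm : 0 < m) (t : ℝ) : stabilityProfile N m t 0 = t := by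
  obtain ⟨m, rfl⟩ := Nat.exists_eq_add_of_lt hm
  simp [stabilityProfile, psi, sum_range_succ']

theorem stabilityProfile_one {N m : ℕ} (hm : m ≤ N) (t : ℝ) : stabilityProfile N m t 1 = 0 := by
  have : ∀ q ∈ range m, psi N q 1 = 0 := fun q hq => by
    simp [psi, Nat.sub_ne_zero_of_lt (lt_of_lt_of_le (mem_range.mp hq) hm)]
  simp [stabilityProfile, sum_eq_zero this]

theorem continuous_stabilityProfile (N m : ℕ) (t : ℝ) : Continuous (stabilityProfile N m t) := by
  unfold stabilityProfile psi
  fun_prop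

theorem hasDerivAt_stabilityProfile {N m : ℕ} (hN : 0 < N) (hm : 0 < m) (t x : ℝ) :
    HasDerivAt (stabilityProfile N m t)
      (N / m * psi (N - 1) (m - 1) x * (m * (1 - t) - (N + 1) * x)) x := by
  obtain ⟨N, rfl⟩ : ∃ N', N = N' + 1 := ⟨N - 1, by omega⟩
  obtain ⟨m, rfl⟩ : ∃ m', m = m' + 1 := ⟨m - 1, by omega⟩
  refine ((((hasDerivAt_id' x).const_sub 1).mul (hasDerivAt_psi_succ (N + 1) m x)).add
    ((hasDerivAt_sum_range_psi (N + 1) m x).const_mul t)).congr_deriv ?_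
  have hm : (m : ℝ) + 1 ≠ 0 := by positivity
  have hpascal := psi_succ_succ N m x
  have hchoose := succ_mul_psi_succ_succ N m x
  simp only [Nat.add_sub_cancel, Nat.cast_add, Nat.cast_one]
  field_simp
  linear_combination (m + 1) * (N + 1) * hpascal - (N + 2) * hchoose

theorem strictMonoOn_stabilityProfile {N m : ℕ} (hm : 0 < m) (hmN : m ≤ N) {t : ℝ} (ht : 0 ≤ t) :
    StrictMonoOn (stabilityProfile N m t) (Set.Icc 0 (m * (1 - t) / (N + 1))) := by
  refine strictMonoOn_of_deriv_pos (convex_Icc _ _)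
    (continuous_stabilityProfile N m t).continuousOn fun x hx => ?_
  rw [interior_Icc, Set.mem_Ioo, lt_div_iff₀ (by positivity)] at hx
  have hm' : (0 : ℝ) < m := by exact_mod_cast hm
  have hmN' : (m : ℝ) ≤ N := by exact_mod_cast hmN
  have hψ := psi_pos (j := N - 1) (q := m - 1) (by omega) hx.1 (by nlinarith)
  rw [(hasDerivAt_stabilityProfile (by omega) hm t x).deriv]
  have hN' : (0 : ℝ) < N := by exact_mod_cast hm.trans_le hmN
  exact mul_pos (mul_pos (div_pos hN' hm') hψ) (by linarith)

theorem strictAntiOn_stabilityProfile {N m : ℕ} (hm : 0 < m) (hmN : m ≤ N) {t : ℝ} (ht : t ≤ 1) :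
    StrictAntiOn (stabilityProfile N m t) (Set.Icc (m * (1 - t) / (N + 1)) 1) := by
  refine strictAntiOn_of_deriv_neg (convex_Icc _ _)
    (continuous_stabilityProfile N m t).continuousOn fun x hx => ?_
  rw [interior_Icc, Set.mem_Ioo, div_lt_iff₀ (by positivity)] at hx
  have hm' : (0 : ℝ) < m := by exact_mod_cast hm
  have hψ := psi_pos (j := N - 1) (q := m - 1) (by omega) (by nlinarith) hx.2
  rw [(hasDerivAt_stabilityProfile (by omega) hm t x).deriv]
  have hN' : (0 : ℝ) < N := by exact_mod_cast hm.trans_le hmN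
  exact mul_neg_of_pos_of_neg (mul_pos (div_pos hN' hm') hψ) (by linarith)

theorem Tk_stability_band_general (n : ℕ) (hn : 3 ≤ n) (b c : ℝ)
    (hb0 : 0 < b / n) (hbc : b / n < c) (hcb : c < b)
    (k : ℕ) (hk2 : k ≤ n - 2) :
    ∃ δ₀ : ℝ, 0 < δ₀ ∧ δ₀ < 1 ∧
      ∀ δ : ℝ, δ₀ < δ → δ < 1 →
        ∃ εlo εhi : ℝ, 0 < εlo ∧ εlo < εhi ∧ εhi < 1 ∧
          {ε : ℝ | ε ∈ Set.Ioo (0 : ℝ) 1 ∧ Vk n k b c ε δ > Wn n k b ε δ} =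
            Set.Ioo εlo εhi ∧
          {ε : ℝ | ε ∈ Set.Ioo (0 : ℝ) 1 ∧
              Delta n k ε δ > 1 - n * (b - c) / (((n : ℝ) - 1) * b)} =
            Set.Ioo εlo εhi := by
  have hb : 0 < b := (div_pos_iff_of_pos_right (by positivity)).mp hb0
  obtain ⟨ht0, ht1⟩ := threshold_mem_Ioo (by omega) hbc hcb
  set t := threshold n b c
  have hm : 0 < n - k - 1 := by omega
  have hmN : n - k - 1 ≤ n - 1 := by omega
  set g := stabilityProfile (n - 1) (n - k - 1) t
  set p : ℝ := (n - k - 1 : ℕ) * (1 - t) / ((n - 1 : ℕ) + 1)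
  have hp0 : 0 < p := div_pos (mul_pos (by exact_mod_cast hm) (by linarith)) (by positivity)
  have hp1 : p < 1 := by
    have : ((n - k - 1 : ℕ) : ℝ) ≤ (n - 1 : ℕ) := by exact_mod_cast hmN
    rw [div_lt_one (by positivity)]
    nlinarith
  have hgp : t < g p := by
    simpa [g, stabilityProfile_zero hm] using
      strictMonoOn_stabilityProfile hm hmN ht0.le (Set.left_mem_Icc.2 hp0.le)
        (Set.right_mem_Icc.2 hp0.le) hp0
  have hgp0 : 0 < g p := ht0.trans hgp
  refine ⟨t / g p, by positivity, (div_lt_one hgp0).2 hgp, fun δ hδ hδ1 => ?_⟩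
  have hδ0 : 0 < δ := (by positivity : 0 < t / g p).trans hδ
  obtain ⟨lo, hi, hlo, hlohi, hhi, hset⟩ := exists_superlevel_eq_Ioo_of_unimodal (s := t / δ)
    hp0.le hp1.le (continuous_stabilityProfile _ _ t).continuousOn
    (strictMonoOn_stabilityProfile hm hmN ht0.le) (strictAntiOn_stabilityProfile hm hmN ht1.le)
    (by rw [stabilityProfile_zero hm, lt_div_iff₀ hδ0]; nlinarith)
    (by rw [stabilityProfile_one hmN]; positivity)
    (by rwa [div_lt_comm₀ hδ0 hgp0])
  have hΔ : {ε : ℝ | ε ∈ Set.Ioo (0 : ℝ) 1 ∧ Delta n k ε δ > t} = Set.Ioo lo hi :=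
    hset ▸ Set.ext fun ε => and_congr_right fun hε => lt_Delta_iff t hε.1.le hε.2.le hδ0 hδ1
  refine ⟨lo, hi, hlo, hlohi, hhi, hΔ ▸ Set.ext fun ε => and_congr_right fun hε => ?_, hΔ⟩
  exact Wn_lt_Vk_iff_lt_Delta (by omega) k hb c hε.1.le hε.2 hδ0.le hδ1

/-- Let `t = 1 − n(b−c)/((n−1)b) ∈ (0,1)`.  For every `k ∈ {1,…,n−2}` there
exists `δ₀ ∈ (0,1)` such that for all `δ ∈ (δ₀,1)` the set
`{ε ∈ (0,1) : V_k(ε,δ) > W_n(ε,δ)}` (equivalently `{ε ∈ (0,1) : Δ(ε;k,δ) > t}`)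
is a nonempty open interval `(ε̲, ε̄)` with `0 < ε̲ < ε̄ < 1`. -/
theorem Tk_stability_band (n : ℕ) (hn : 3 ≤ n) (b c : ℝ)
    (hb0 : 0 < b / n) (hbc : b / n < c) (hcb : c < b)
    (k : ℕ) (hk1 : 1 ≤ k) (hk2 : k ≤ n - 2) :
    ∃ δ₀ : ℝ, 0 < δ₀ ∧ δ₀ < 1 ∧
      ∀ δ : ℝ, δ₀ < δ → δ < 1 →
        ∃ εlo εhi : ℝ, 0 < εlo ∧ εlo < εhi ∧ εhi < 1 ∧
          {ε : ℝ | ε ∈ Set.Ioo (0 : ℝ) 1 ∧ Vk n k b c ε δ > Wn n k b ε δ} =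
            Set.Ioo εlo εhi ∧
          {ε : ℝ | ε ∈ Set.Ioo (0 : ℝ) 1 ∧
              Delta n k ε δ > 1 - n * (b - c) / (((n : ℝ) - 1) * b)} =
            Set.Ioo εlo εhi :=
  Tk_stability_band_general n hn b c hb0 hbc hcb k hk2
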